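/- There exists a universal constant C > 0 such that for every integer n ≥ 1, every integer k ≥ 2, and every probability vector P ∈ M_k with all p_i > 0, the variance of the KL divergence of the empirical distribution from the true distribution satisfies Var[D(P̂_{n,k}‖P)] ≤ C·k/n². -/

import Mathlib

noncomputable def empDist {n k : ℕ} (ω : Fin n → Fin k) (i : Fin k) : ℝ :=
  ((Finset.univ.filter (fun j => ω j = i)).card : ℝ) / n

open Classical in
noncomputable def probOf {n k : ℕ} (p : Fin k → ℝ) (E : Set (Fin n → Fin k)) : ℝ :=
  ∑ ω : Fin n → Fin k, if ω ∈ E then ∏ j, p (ω j) else 0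

noncomputable def klDiv {k : ℕ} (q p : Fin k → ℝ) : ℝ :=
  ∑ i, q i * Real.log (q i / p i)

noncomputable def expect {n k : ℕ} (p : Fin k → ℝ) (f : (Fin n → Fin k) → ℝ) : ℝ :=
  ∑ ω : Fin n → Fin k, (∏ j, p (ω j)) * f ω

noncomputable def var {n k : ℕ} (p : Fin k → ℝ) (f : (Fin n → Fin k) → ℝ) : ℝ :=
  expect p (fun ω => (f ω - expect p f) ^ 2)

/-!
By the Efron–Stein inequality, the variance is at most the sum over the `n` samples of the
expected variance of the divergence when that one sample is redrawn. If the other samples have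
letter counts `N`, redrawing the remaining sample as `b` shifts the divergence by
`(Δ_b + 1) / n` plus a term independent of `b`, where `Δ_b = klIncrement (n p_b) N_b`, so
this conditional variance is at most `n⁻² ∑_b p_b Δ_b²`. Now `Δ_b = log ((N_b + 1) / t) - r`
with `t = n p_b` and `0 ≤ r ≤ 1 / (N_b + 1)`, and `log² u ≤ (u - 1)² / u`; the size-biasing identity
`E[N h(N)] = n p E[h(N' + 1)]` (for `N ~ Bin(n, p)`, `N' ~ Bin(n - 1, p)`) then reduces
`n p_b E[Δ_b²]` to the binomial variance and gives `n p_b E[Δ_b²] ≤ 4`. Altogether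
`Var ≤ n · n⁻² · ∑_b 4 / n = 4 k / n²`.
-/

open Finset Real

section WeightedVariance

variable {ι κ : Type*} [Fintype ι] [Fintype κ] {w : ι → ℝ}

noncomputable def weightedVar (w d : ι → ℝ) : ℝ := ∑ i, w i * (d i - ∑ j, w j * d j) ^ 2

lemma sq_sum_mul_le (hw : ∀ i, 0 ≤ w i) (hw1 : ∑ i, w i = 1) (d : ι → ℝ) :
    (∑ i, w i * d i) ^ 2 ≤ ∑ i, w i * d i ^ 2 :=
  (even_two.convexOn_pow (𝕜 := ℝ)).map_sum_le (fun i _ => hw i) hw1 fun _ _ => Set.mem_univ _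

lemma sum_mul_sub_sq_eq (hw1 : ∑ i, w i = 1) (d : ι → ℝ) (c : ℝ) :
    ∑ i, w i * (d i - c) ^ 2 = weightedVar w d + (∑ i, w i * d i - c) ^ 2 := by
  set μ := ∑ i, w i * d i
  have h : ∀ i, w i * (d i - c) ^ 2
      = w i * (d i - μ) ^ 2 + 2 * (μ - c) * (w i * d i) - (μ - c) * (μ + c) * w i := by
    intro i; ring
  simp only [h, sum_sub_distrib, sum_add_distrib, ← mul_sum, hw1, weightedVar]
  ring

lemma weightedVar_le_sum_mul_sub_sq (hw1 : ∑ i, w i = 1) (d : ι → ℝ) (c : ℝ) :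
    weightedVar w d ≤ ∑ i, w i * (d i - c) ^ 2 := by
  rw [sum_mul_sub_sq_eq hw1]
  exact le_add_of_nonneg_right (sq_nonneg _)

lemma weightedVar_sum_le (hw : ∀ i, 0 ≤ w i) (hw1 : ∑ i, w i = 1) {v : κ → ℝ}
    (hv : ∀ b, 0 ≤ v b) (hv1 : ∑ b, v b = 1) (d : κ → ι → ℝ) :
    weightedVar w (fun i => ∑ b, v b * d b i) ≤ ∑ b, v b * weightedVar w (d b) := by
  set μ : κ → ℝ := fun b => ∑ i, w i * d b i
  calc weightedVar w (fun i => ∑ b, v b * d b i)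
      ≤ ∑ i, w i * (∑ b, v b * d b i - ∑ b, v b * μ b) ^ 2 :=
        weightedVar_le_sum_mul_sub_sq hw1 _ _
    _ = ∑ i, w i * (∑ b, v b * (d b i - μ b)) ^ 2 := by
        simp only [mul_sub, sum_sub_distrib]
    _ ≤ ∑ i, w i * ∑ b, v b * (d b i - μ b) ^ 2 :=
        sum_le_sum fun i _ => mul_le_mul_of_nonneg_left (sq_sum_mul_le hv hv1 _) (hw i)
    _ = ∑ b, v b * weightedVar w (d b) := by
        simp only [weightedVar, mul_sum]
        rw [sum_comm]
        exact sum_congr rfl fun b _ => sum_congr rfl fun i _ => by ring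

end WeightedVariance

lemma sq_log_le_sq_sub_one_div {u : ℝ} (hu : 0 < u) : log u ^ 2 ≤ (u - 1) ^ 2 / u := by
  set y := log u / 2
  have hy : y ^ 2 ≤ sinh y ^ 2 := by
    rw [sq_le_sq, abs_sinh]
    exact self_le_sinh_iff.mpr (abs_nonneg y)
  have hexp : exp y ^ 2 = u := by
    rw [← exp_nat_mul, Nat.cast_ofNat, mul_div_cancel₀ _ two_ne_zero, exp_log hu]
  have hsinh : 4 * sinh y ^ 2 = (u - 1) ^ 2 / u := by
    rw [sinh_eq, exp_neg, ← hexp]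
    field_simp
    ring
  calc log u ^ 2 = 4 * y ^ 2 := by ring
    _ ≤ 4 * sinh y ^ 2 := by linarith
    _ = (u - 1) ^ 2 / u := hsinh

lemma mul_log_add_one_div_self_mem_Icc {x : ℝ} (hx : 0 ≤ x) :
    x * log ((x + 1) / x) ∈ Set.Icc (x / (x + 1)) 1 := by
  rcases hx.eq_or_lt with rfl | hx
  · simp
  have hu : 0 < (x + 1) / x := by positivity
  have hupper := log_le_sub_one_of_pos hu
  have hlower := one_sub_inv_le_log_of_pos hu
  rw [inv_div] at hlower
  constructor
  · calc x / (x + 1) = x * (1 - x / (x + 1)) := by field_simp; ring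
      _ ≤ x * log ((x + 1) / x) := by gcongr
  · calc x * log ((x + 1) / x) ≤ x * ((x + 1) / x - 1) := by gcongr
      _ = 1 := by field_simp; ring

noncomputable def klIncrement (t x : ℝ) : ℝ := (x + 1) * log ((x + 1) / t) - x * log (x / t) - 1

lemma klIncrement_eq {t x : ℝ} (ht : 0 < t) (hx : 0 ≤ x) :
    klIncrement t x = log ((x + 1) / t) - (1 - x * log ((x + 1) / x)) := by
  rcases hx.eq_or_lt with rfl | hx
  · simp [klIncrement]
  rw [klIncrement, log_div (by positivity) ht.ne', log_div hx.ne' ht.ne',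
    log_div (by positivity) hx.ne']
  ring

lemma mul_klIncrement_sq_le {t x : ℝ} (ht : 0 < t) (hx : 0 ≤ x) :
    t * klIncrement t x ^ 2 ≤ (2 * (x + 1 - t) ^ 2 + 2 * t) / (x + 1) := by
  have hx1 : 0 < x + 1 := by positivity
  set r := 1 - x * log ((x + 1) / x)
  have hr : 0 ≤ r ∧ r ≤ 1 / (x + 1) := by
    obtain ⟨hlo, hhi⟩ := mul_log_add_one_div_self_mem_Icc hx
    refine ⟨by linarith, ?_⟩
    have : 1 - x / (x + 1) = 1 / (x + 1) := by field_simp; ring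
    linarith
  have hr_sq : r ^ 2 ≤ 1 / (x + 1) := by
    have : 1 / (x + 1) ≤ 1 := by rw [div_le_one hx1]; linarith
    nlinarith
  have hlog_sq : log ((x + 1) / t) ^ 2 ≤ (x + 1 - t) ^ 2 / (t * (x + 1)) := by
    calc log ((x + 1) / t) ^ 2 ≤ ((x + 1) / t - 1) ^ 2 / ((x + 1) / t) :=
          sq_log_le_sq_sub_one_div (by positivity)
      _ = (x + 1 - t) ^ 2 / (t * (x + 1)) := by field_simp
  rw [klIncrement_eq ht hx]
  calc t * (log ((x + 1) / t) - r) ^ 2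
      ≤ t * (2 * log ((x + 1) / t) ^ 2 + 2 * r ^ 2) := by
        gcongr; nlinarith [sq_nonneg (log ((x + 1) / t) + r)]
    _ ≤ t * (2 * ((x + 1 - t) ^ 2 / (t * (x + 1))) + 2 * (1 / (x + 1))) := by gcongr
    _ = (2 * (x + 1 - t) ^ 2 + 2 * t) / (x + 1) := by field_simp

section SampleSpace

variable {k m : ℕ} {p : Fin k → ℝ}

lemma sum_prod_eq_one (hs : ∑ i, p i = 1) : ∑ ω : Fin m → Fin k, ∏ j, p (ω j) = 1 := by
  rw [← Fintype.piFinset_univ, ← prod_univ_sum, hs, prod_const_one]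

lemma expect_const (hs : ∑ i, p i = 1) (c : ℝ) : expect (n := m) p (fun _ => c) = c := by
  rw [_root_.expect, ← sum_mul, sum_prod_eq_one hs, one_mul]

lemma expect_mono (hp : ∀ i, 0 ≤ p i) {f g : (Fin m → Fin k) → ℝ} (h : ∀ ω, f ω ≤ g ω) :
    expect p f ≤ expect p g :=
  sum_le_sum fun ω _ => mul_le_mul_of_nonneg_left (h ω) (prod_nonneg fun j _ => hp (ω j))

lemma expect_add (f g : (Fin m → Fin k) → ℝ) :
    expect p (fun ω => f ω + g ω) = expect p f + expect p g := by
  simp only [_root_.expect, mul_add, sum_add_distrib]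

lemma expect_const_mul (c : ℝ) (f : (Fin m → Fin k) → ℝ) :
    expect p (fun ω => c * f ω) = c * expect p f := by
  simp only [_root_.expect, mul_sum, mul_left_comm]

lemma expect_sum {κ : Type*} (s : Finset κ) (f : κ → (Fin m → Fin k) → ℝ) :
    expect p (fun ω => ∑ b ∈ s, f b ω) = ∑ b ∈ s, expect p (f b) := by
  simp only [_root_.expect, mul_sum]
  exact sum_comm

lemma expect_eq_expect_sum_insertNth (j : Fin (m + 1)) (f : (Fin (m + 1) → Fin k) → ℝ) :
    expect p f = expect p (fun ν => ∑ b, p b * f (j.insertNth b ν)) := by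
  rw [_root_.expect, ← (Fin.insertNthEquiv (fun _ => Fin k) j).sum_comp, Fintype.sum_prod_type,
    expect_sum]
  refine sum_congr rfl fun b _ => ?_
  rw [expect_const_mul, _root_.expect, mul_sum]
  refine sum_congr rfl fun ν _ => ?_
  rw [Fin.prod_univ_succAbove _ j]
  simp only [Fin.insertNthEquiv_apply, Fin.insertNth_apply_same, Fin.insertNth_apply_succAbove,
    mul_assoc]
  rfl

lemma expect_weightedVar_update (hs : ∑ i, p i = 1) (j : Fin (m + 1))
    (f : (Fin (m + 1) → Fin k) → ℝ) :
    expect p (fun ω => weightedVar p fun b => f (Function.update ω j b))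
      = expect p (fun ν => weightedVar p fun b => f (j.insertNth b ν)) := by
  rw [expect_eq_expect_sum_insertNth j]
  simp only [Fin.update_insertNth, ← sum_mul, hs, one_mul]

lemma var_eq_expect_weightedVar_add_var (hs : ∑ i, p i = 1) (j : Fin (m + 1))
    (f : (Fin (m + 1) → Fin k) → ℝ) :
    var p f = expect p (fun ν => weightedVar p fun b => f (j.insertNth b ν))
      + var p (fun ν => ∑ b, p b * f (j.insertNth b ν)) := by
  have hmean := expect_eq_expect_sum_insertNth (p := p) j f
  rw [var, var, ← hmean, expect_eq_expect_sum_insertNth j, ← expect_add]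
  simp only [sum_mul_sub_sq_eq hs]

theorem var_le_sum_expect_weightedVar (hp : ∀ i, 0 ≤ p i) (hs : ∑ i, p i = 1)
    (f : (Fin m → Fin k) → ℝ) :
    var p f ≤ ∑ j, expect p (fun ω => weightedVar p fun b => f (Function.update ω j b)) := by
  induction m with
  | zero =>
    have hvar : var p f = 0 := by
      simp only [var, _root_.expect, Fintype.sum_unique, univ_eq_empty, prod_empty, one_mul,
        sub_self]
      norm_num
    simp [hvar]
  | succ m ih =>
    set g : (Fin m → Fin k) → ℝ := fun ν => ∑ b, p b * f (Fin.cons b ν)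
    have hg : ∀ j : Fin m,
        expect p (fun ν => weightedVar p fun c => g (Function.update ν j c))
          ≤ expect p (fun ω => weightedVar p fun c => f (Function.update ω j.succ c)) := by
      intro j
      rw [expect_eq_expect_sum_insertNth 0
        (fun ω => weightedVar p fun c => f (Function.update ω j.succ c))]
      refine expect_mono hp fun ν => ?_
      simpa only [g, Fin.insertNth_zero', Fin.cons_update] using
        weightedVar_sum_le hp hs hp hs fun b c => f (Fin.cons b (Function.update ν j c))
    have hsplit := var_eq_expect_weightedVar_add_var hs 0 f
    simp only [Fin.insertNth_zero'] at hsplit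
    rw [Fin.sum_univ_succ, hsplit, expect_weightedVar_update hs 0]
    simp only [Fin.insertNth_zero']
    exact add_le_add le_rfl ((ih g).trans (sum_le_sum fun j _ => hg j))

def letterCount {n : ℕ} (ω : Fin n → Fin k) (a : Fin k) : ℕ := #{j | ω j = a}

lemma letterCount_insertNth (j : Fin (m + 1)) (b : Fin k) (ν : Fin m → Fin k) (a : Fin k) :
    letterCount (j.insertNth b ν) a = (if b = a then 1 else 0) + letterCount ν a := by
  simp only [letterCount, card_filter, Fin.sum_univ_succAbove _ j, Fin.insertNth_apply_same,
    Fin.insertNth_apply_succAbove]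

lemma sum_letterCount_insertNth (F : Fin k → ℕ → ℝ) (j : Fin (m + 1)) (b : Fin k)
    (ν : Fin m → Fin k) :
    ∑ a, F a (letterCount (j.insertNth b ν) a)
      = ∑ a, F a (letterCount ν a) + (F b (letterCount ν b + 1) - F b (letterCount ν b)) := by
  have h : ∀ a, F a (letterCount (j.insertNth b ν) a) = F a (letterCount ν a)
      + if b = a then F b (letterCount ν b + 1) - F b (letterCount ν b) else 0 := by
    intro a
    rw [letterCount_insertNth]
    split_ifs with hba
    · subst hba; rw [add_comm 1]; ring
    · simp
  simp only [h, sum_add_distrib, sum_ite_eq, mem_univ, if_true]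

lemma expect_letterCount_mul (a : Fin k) (h : ℕ → ℝ) :
    expect p (fun ω : Fin (m + 1) → Fin k => letterCount ω a * h (letterCount ω a))
      = (m + 1) * p a * expect p (fun ν : Fin m → Fin k => h (letterCount ν a + 1)) := by
  have hsum : ∀ ω : Fin (m + 1) → Fin k, letterCount ω a * h (letterCount ω a)
      = ∑ j, if ω j = a then h (letterCount ω a) else 0 := by
    intro ω
    rw [← sum_filter, sum_const, nsmul_eq_mul]
    rfl
  simp only [hsum]
  rw [expect_sum]
  have hj : ∀ j : Fin (m + 1), expect p (fun ω => if ω j = a then h (letterCount ω a) else 0)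
      = p a * expect p (fun ν : Fin m → Fin k => h (letterCount ν a + 1)) := by
    intro j
    rw [expect_eq_expect_sum_insertNth j, ← expect_const_mul]
    congr 1
    funext ν
    simp only [Fin.insertNth_apply_same, letterCount_insertNth, mul_ite, mul_zero, sum_ite_eq',
      mem_univ, if_true, add_comm 1]
  simp only [hj, sum_const, card_univ, Fintype.card_fin, nsmul_eq_mul]
  push_cast
  ring

lemma expect_letterCount (hs : ∑ i, p i = 1) (a : Fin k) :
    expect p (fun ω : Fin m → Fin k => (letterCount ω a : ℝ)) = m * p a := by
  cases m with
  | zero => simp [letterCount, _root_.expect]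
  | succ m =>
    simpa [expect_const hs] using expect_letterCount_mul (p := p) (m := m) a (fun _ => 1)

lemma expect_letterCount_sub_sq (hs : ∑ i, p i = 1) (a : Fin k) :
    expect p (fun ω : Fin (m + 1) → Fin k => ((letterCount ω a : ℝ) - (m + 1) * p a) ^ 2)
      = (m + 1) * p a * (1 - p a) := by
  have hsq := expect_letterCount_mul (p := p) (m := m) a (fun c => c)
  have hexpand : ∀ ω : Fin (m + 1) → Fin k, ((letterCount ω a : ℝ) - (m + 1) * p a) ^ 2
      = letterCount ω a * letterCount ω a
        + ((-2 * ((m + 1) * p a)) * letterCount ω a + ((m + 1) * p a) ^ 2) := by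
    intro ω; ring
  simp only [hexpand, expect_add, expect_const_mul, expect_const hs, hsq, Nat.cast_succ,
    expect_letterCount hs]
  ring

lemma mul_expect_klIncrement_sq_le (hp : ∀ i, 0 ≤ p i) (hs : ∑ i, p i = 1) {a : Fin k}
    (ha : 0 < p a) :
    (m + 1) * p a * expect p (fun ν : Fin m → Fin k =>
      klIncrement ((m + 1) * p a) (letterCount ν a) ^ 2) ≤ 4 := by
  set t : ℝ := (m + 1) * p a
  have ht : 0 < t := by positivity
  set h : ℕ → ℝ := fun c => (2 * (c - t) ^ 2 + 2 * t) / c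
  have hmul_h : ∀ c : ℕ, c * h c ≤ 2 * (c - t) ^ 2 + 2 * t := by
    intro c
    rcases c.eq_zero_or_pos with rfl | hc
    · simp only [Nat.cast_zero, zero_mul]; positivity
    · rw [mul_div_cancel₀ _ (by positivity)]
  have hbiased : t * expect p (fun ν : Fin m → Fin k => h (letterCount ν a + 1)) ≤ 4 * t :=
    calc t * expect p (fun ν : Fin m → Fin k => h (letterCount ν a + 1))
        = expect p (fun ω : Fin (m + 1) → Fin k => letterCount ω a * h (letterCount ω a)) :=
          (expect_letterCount_mul a h).symm
      _ ≤ expect p (fun ω : Fin (m + 1) → Fin k =>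
            2 * ((letterCount ω a : ℝ) - t) ^ 2 + 2 * t) := expect_mono hp fun ω => hmul_h _
      _ = 2 * (t * (1 - p a)) + 2 * t := by
          rw [expect_add, expect_const_mul, expect_letterCount_sub_sq hs, expect_const hs]
      _ ≤ 4 * t := by nlinarith
  calc t * expect p (fun ν : Fin m → Fin k => klIncrement t (letterCount ν a) ^ 2)
      = expect p (fun ν : Fin m → Fin k => t * klIncrement t (letterCount ν a) ^ 2) :=
        (expect_const_mul t _).symm
    _ ≤ expect p (fun ν : Fin m → Fin k => h (letterCount ν a + 1)) := by
        refine expect_mono hp fun ν => ?_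
        simpa only [h, Nat.cast_succ] using mul_klIncrement_sq_le ht (Nat.cast_nonneg _)
    _ ≤ 4 := le_of_mul_le_mul_left (by linarith) ht

lemma klDiv_empDist {n : ℕ} (ω : Fin n → Fin k) (p : Fin k → ℝ) :
    klDiv (empDist ω) p
      = (∑ a, (letterCount ω a : ℝ) * log (letterCount ω a / (n * p a))) / n := by
  rw [klDiv, sum_div]
  refine sum_congr rfl fun a _ => ?_
  change (letterCount ω a : ℝ) / n * log ((letterCount ω a : ℝ) / n / p a) = _
  rw [div_div]
  ring

lemma weightedVar_klDiv_empDist_insertNth_le (hs : ∑ i, p i = 1) (j : Fin (m + 1))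
    (ν : Fin m → Fin k) :
    weightedVar p (fun b => klDiv (empDist (j.insertNth b ν)) p)
      ≤ ∑ b, p b / (m + 1) ^ 2 * klIncrement ((m + 1) * p b) (letterCount ν b) ^ 2 := by
  set F : Fin k → ℕ → ℝ := fun a c => c * log (c / ((m + 1 : ℕ) * p a))
  have hF : ∀ b, klDiv (empDist (j.insertNth b ν)) p
      = (∑ a, F a (letterCount ν a) + 1) / (m + 1)
        + klIncrement ((m + 1) * p b) (letterCount ν b) / (m + 1) := by
    intro b
    rw [klDiv_empDist, sum_letterCount_insertNth F, klIncrement]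
    simp only [F]
    push_cast
    ring
  refine (weightedVar_le_sum_mul_sub_sq hs _ ((∑ a, F a (letterCount ν a) + 1) / (m + 1))).trans
    (le_of_eq (sum_congr rfl fun b _ => ?_))
  rw [hF, add_sub_cancel_left, div_pow]
  ring

lemma expect_weightedVar_klDiv_empDist_update_le (hp : ∀ i, 0 < p i) (hs : ∑ i, p i = 1)
    (j : Fin (m + 1)) :
    expect p (fun ω => weightedVar p fun b => klDiv (empDist (Function.update ω j b)) p)
      ≤ 4 * k / (m + 1) ^ 3 := by
  have hp0 : ∀ i, 0 ≤ p i := fun i => (hp i).le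
  rw [expect_weightedVar_update hs j fun ω => klDiv (empDist ω) p]
  calc _ ≤ expect p (fun ν : Fin m → Fin k =>
          ∑ b, p b / (m + 1) ^ 2 * klIncrement ((m + 1) * p b) (letterCount ν b) ^ 2) :=
        expect_mono hp0 fun ν => weightedVar_klDiv_empDist_insertNth_le hs j ν
    _ = ∑ b, (m + 1) * p b * expect p (fun ν : Fin m → Fin k =>
          klIncrement ((m + 1) * p b) (letterCount ν b) ^ 2) / (m + 1) ^ 3 := by
        rw [expect_sum]
        refine sum_congr rfl fun b _ => ?_
        rw [expect_const_mul]
        field_simp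
    _ ≤ ∑ _b : Fin k, 4 / ((m : ℝ) + 1) ^ 3 :=
        sum_le_sum fun b _ => by gcongr; exact mul_expect_klIncrement_sq_le hp0 hs (hp b)
    _ = 4 * k / (m + 1) ^ 3 := by
        simp only [sum_const, card_univ, Fintype.card_fin, nsmul_eq_mul]
        ring

end SampleSpace

/-- Variance upper bound: there is a universal constant `C > 0` with
`Var[D(P̂_{n,k}‖P)] ≤ C·k/n²` for all `n ≥ 1`, `k ≥ 2` and all `P`. -/
theorem kl_variance_le_k_div_n_sq :
    ∃ C : ℝ, 0 < C ∧ ∀ (n k : ℕ), 1 ≤ n → 2 ≤ k →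
      ∀ p : Fin k → ℝ, (∀ i, 0 < p i) → (∑ i, p i = 1) →
        var p (fun ω : Fin n → Fin k => klDiv (empDist ω) p) ≤
          C * k / (n : ℝ) ^ 2 := by
  refine ⟨4, by norm_num, fun n k hn _ p hp hs => ?_⟩
  obtain ⟨m, rfl⟩ : ∃ m, n = m + 1 := ⟨n - 1, by omega⟩
  refine (var_le_sum_expect_weightedVar (fun i => (hp i).le) hs _).trans ?_
  calc _ ≤ ∑ _j : Fin (m + 1), 4 * k / ((m : ℝ) + 1) ^ 3 :=
        sum_le_sum fun j _ => expect_weightedVar_klDiv_empDist_update_le hp hs j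
    _ = 4 * k / ((m + 1 : ℕ) : ℝ) ^ 2 := by
        simp only [sum_const, card_univ, Fintype.card_fin, nsmul_eq_mul]
        push_cast
        field_simp
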